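/- arXiv:2203.09643 — 3 statements merged into one kernel-verified Lean document; each statement's English description precedes it below -/
import Mathlib

section
/- Busemann functions of lines in finite-dimensional normed spaces with C¹ norm are linear: let ‖·‖ be a norm on ℝⁿ that is C¹ away from the origin, and let γ(s) = s·v be a line through the origin with ‖v‖ = 1. Then the Busemann function b⁺(x) := lim_{s→∞} (‖sv - x‖ - s) equals -⟨∇‖·‖(v), x⟩; in particular b⁺ is linear and b⁺ = -b⁻ where b⁻(x) := lim_{s→∞} (‖-sv - x‖ - s). -/
open Filter Topology

/-!
By positive homogeneity, `N (s • v + x) - s * N v = s * (N (v + s⁻¹ • x) - N v)`, which is the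
difference quotient of `N` at `v` in direction `x` with step `s⁻¹`; as `s → ∞` it tends to
`fderiv ℝ N v x`. Since `N` is even, `N ((-s) • v - x) = N (s • v + x)`, so both Busemann limits
come from this one.
-/

theorem HasFDerivAt.tendsto_apply_smul_add_sub_atTop {E : Type*} [NormedAddCommGroup E]
    [NormedSpace ℝ E] {f : E → ℝ} {f' : E →L[ℝ] ℝ} {w : E}
    (hhom : ∀ a : ℝ, 0 < a → ∀ z, f (a • z) = a * f z) (hf : HasFDerivAt f f' w) (x : E) :
    Tendsto (fun s : ℝ => f (s • w + x) - s * f w) atTop (𝓝 (f' x)) := by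
  have hline : HasDerivAt (fun t : ℝ => f (w + t • x)) (f' x) 0 := by
    have hcurve : HasDerivAt (fun t : ℝ => w + t • x) x 0 := by
      simpa using ((hasDerivAt_id (0 : ℝ)).smul_const x).const_add w
    exact hf.comp_hasDerivAt_of_eq (0 : ℝ) hcurve (by simp)
  refine (hline.tendsto_slope_zero_right.comp tendsto_inv_atTop_nhdsGT_zero).congr' ?_
  filter_upwards [eventually_gt_atTop 0] with s hs
  have hscale : f (s • w + x) = s * f (w + s⁻¹ • x) := by
    rw [← hhom s hs, smul_add, smul_smul, mul_inv_cancel₀ hs.ne', one_smul]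
  simp only [Function.comp_apply, inv_inv, zero_add, zero_smul, add_zero, smul_eq_mul, hscale]
  ring

theorem stmt_11_general (n : ℕ) (N : (Fin n → ℝ) → ℝ)
    (hhom : ∀ (a : ℝ) (z : Fin n → ℝ), N (a • z) = |a| * N z)
    (hC1 : ∀ z : Fin n → ℝ, z ≠ 0 → ContDiffAt ℝ 1 N z)
    (v : Fin n → ℝ) (hv : N v = 1) :
    ∀ x : Fin n → ℝ,
      Filter.Tendsto (fun s : ℝ => N (s • v - x) - s) Filter.atTop
        (𝓝 (-(fderiv ℝ N v x))) ∧
      Filter.Tendsto (fun s : ℝ => N ((-s) • v - x) - s) Filter.atTop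
        (𝓝 (fderiv ℝ N v x)) := by
  intro x
  have hv0 : v ≠ 0 := by
    rintro rfl
    simpa [hv] using hhom 0 0
  have hN : HasFDerivAt N (fderiv ℝ N v) v :=
    ((hC1 v hv0).differentiableAt one_ne_zero).hasFDerivAt
  have hpos : ∀ a : ℝ, 0 < a → ∀ z, N (a • z) = a * N z := fun a ha z => by
    rw [hhom, abs_of_pos ha]
  have hray := hN.tendsto_apply_smul_add_sub_atTop hpos
  simp only [hv, mul_one] at hray
  constructor
  · simpa [sub_eq_add_neg] using hray (-x)
  · refine (hray x).congr fun s => ?_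
    rw [neg_smul, ← neg_add', ← neg_one_smul ℝ (s • v + x), hhom]
    simp

theorem stmt_11 (n : ℕ) (N : (Fin n → ℝ) → ℝ)
    (hnn : ∀ z, 0 ≤ N z)
    (hdeg : ∀ z, N z = 0 ↔ z = 0)
    (hhom : ∀ (a : ℝ) (z : Fin n → ℝ), N (a • z) = |a| * N z)
    (htri : ∀ z w, N (z + w) ≤ N z + N w)
    (hC1 : ∀ z : Fin n → ℝ, z ≠ 0 → ContDiffAt ℝ 1 N z)
    (v : Fin n → ℝ) (hv : N v = 1) :
    ∀ x : Fin n → ℝ,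
      Filter.Tendsto (fun s : ℝ => N (s • v - x) - s) Filter.atTop
        (𝓝 (-(fderiv ℝ N v x))) ∧
      Filter.Tendsto (fun s : ℝ => N ((-s) • v - x) - s) Filter.atTop
        (𝓝 (fderiv ℝ N v x)) :=
  stmt_11_general n N hhom hC1 v hv
end

section
/- If f : ℝⁿ → ℝ is a generalized linear function on (ℝⁿ, ‖·‖, 𝓛ⁿ) where ‖·‖ is a C¹ norm, then f is a linear (affine) function; more precisely f = f(x̄) + Lip(f)·b⁻ = f(x̄) - Lip(f)·b⁺ for the Busemann functions b^± of an integral line γ through x̄, and these Busemann functions are linear. -/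
open Filter Topology

/-! By positive homogeneity, `N (d + s • v) - s = (N (v + s⁻¹ • d) - N v) / s⁻¹` is a difference
quotient of `N` at `v`, so for a norm differentiable at the unit vector `v` the Busemann functions of
the line `x̄ + s • v` are `b⁻ = N'(v) (· - x̄)` and `b⁺ = -N'(v) (· - x̄)`. Being opposite linear
functionals, they collapse the sandwich `f x̄ - L b⁺ ≤ f ≤ f x̄ + L b⁻` to equalities. -/

theorem HasFDerivAt.tendsto_add_smul_sub_atTop {E : Type*} [NormedAddCommGroup E] [NormedSpace ℝ E]
    {N : E → ℝ} {φ : E →L[ℝ] ℝ} {v : E} (hN : HasFDerivAt N φ v)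
    (hhom : ∀ s : ℝ, 0 < s → ∀ z, N (s • z) = s * N z) (hv : N v = 1) (d : E) :
    Tendsto (fun s : ℝ => N (d + s • v) - s) atTop (𝓝 (φ d)) := by
  have hline : HasDerivAt (fun t : ℝ => N (v + t • d)) (φ d) 0 := by
    have hpath : HasDerivAt (fun t : ℝ => v + t • d) d 0 := by
      simpa using ((hasDerivAt_id (0 : ℝ)).smul_const d).const_add v
    exact (by simpa using hN : HasFDerivAt N φ (v + (0 : ℝ) • d)).comp_hasDerivAt 0 hpath
  have hinv : Tendsto (fun s : ℝ => s⁻¹) atTop (𝓝[≠] 0) :=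
    tendsto_inv_atTop_nhdsGT_zero.mono_right (nhdsWithin_mono _ fun _ hx => ne_of_gt hx)
  refine ((hasDerivAt_iff_tendsto_slope.mp hline).comp hinv).congr' ?_
  filter_upwards [eventually_gt_atTop (0 : ℝ)] with s hs
  have hray : N (d + s • v) = s * N (v + s⁻¹ • d) := by
    rw [← hhom s hs, smul_add, smul_inv_smul₀ hs.ne']
    abel_nf
  simp only [Function.comp_apply, slope_def_field, zero_smul, add_zero, hv, sub_zero, hray]
  field_simp

theorem stmt_12_general (n : ℕ) (N : (Fin n → ℝ) → ℝ)
    (hhom : ∀ (a : ℝ) (z : Fin n → ℝ), N (a • z) = |a| * N z)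
    (hC1 : ∀ z : Fin n → ℝ, z ≠ 0 → ContDiffAt ℝ 1 N z)
    (f : (Fin n → ℝ) → ℝ) (L : ℝ)
    (xbar v : Fin n → ℝ) (hv : N v = 1)
    (γ : ℝ → Fin n → ℝ) (hγ : ∀ s : ℝ, γ s = xbar + s • v)
    (bp bm : (Fin n → ℝ) → ℝ)
    (hbp : ∀ x, Filter.Tendsto (fun s : ℝ => N (x - γ s) - s) Filter.atTop (𝓝 (bp x)))
    (hbm : ∀ x, Filter.Tendsto (fun s : ℝ => N (x - γ (-s)) - s) Filter.atTop (𝓝 (bm x)))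
    (hsand : ∀ x, f xbar - L * bp x ≤ f x ∧ f x ≤ f xbar + L * bm x) :
    (∀ x, f x = f xbar + L * bm x) ∧
    (∀ x, f x = f xbar - L * bp x) ∧
    ∃ w : Fin n → ℝ,
      (∀ x, bm x = ∑ i, w i * (x i - xbar i)) ∧
      (∀ x, bp x = -∑ i, w i * (x i - xbar i)) := by
  have hv0 : v ≠ 0 := by
    rintro rfl
    simpa [hv] using hhom 0 0
  have hN := ((hC1 v hv0).differentiableAt one_ne_zero).hasFDerivAt
  have hray := hN.tendsto_add_smul_sub_atTop (fun s hs z => by rw [hhom, abs_of_pos hs]) hv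
  set φ := fderiv ℝ N v
  have hbm_eq (x) : bm x = φ (x - xbar) :=
    tendsto_nhds_unique (hbm x) <| (hray (x - xbar)).congr fun s => by rw [hγ]; congr 2; module
  have hbp_eq (x) : bp x = -φ (x - xbar) := by
    refine tendsto_nhds_unique (hbp x) ((hray (xbar - x)).congr fun s => ?_) |>.trans ?_
    · rw [hγ, show x - (xbar + s • v) = (-1 : ℝ) • (xbar - x + s • v) by module, hhom]
      simp
    · rw [← map_neg, neg_sub]
  have hfx (x) : f x = f xbar + L * bm x := by
    have := hsand x; rw [hbp_eq, ← hbm_eq] at this; linarith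
  have hφ (x) : φ (x - xbar) = ∑ i, φ (fun j => if i = j then 1 else 0) * (x i - xbar i) := by
    simpa [mul_comm] using φ.toLinearMap.pi_apply_eq_sum_univ (x - xbar)
  exact ⟨hfx, fun x => by rw [hfx, hbp_eq, ← hbm_eq]; ring, _, fun x => by rw [hbm_eq, hφ],
    fun x => by rw [hbp_eq, hφ]⟩

theorem stmt_12 (n : ℕ) (N : (Fin n → ℝ) → ℝ)
    (hnn : ∀ z, 0 ≤ N z)
    (hdeg : ∀ z, N z = 0 ↔ z = 0)
    (hhom : ∀ (a : ℝ) (z : Fin n → ℝ), N (a • z) = |a| * N z)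
    (htri : ∀ z w, N (z + w) ≤ N z + N w)
    (hC1 : ∀ z : Fin n → ℝ, z ≠ 0 → ContDiffAt ℝ 1 N z)
    (f : (Fin n → ℝ) → ℝ) (L : ℝ) (hL : 0 ≤ L)
    (xbar v : Fin n → ℝ) (hv : N v = 1)
    (γ : ℝ → Fin n → ℝ) (hγ : ∀ s : ℝ, γ s = xbar + s • v)
    (bp bm : (Fin n → ℝ) → ℝ)
    (hbp : ∀ x, Filter.Tendsto (fun s : ℝ => N (x - γ s) - s) Filter.atTop (𝓝 (bp x)))
    (hbm : ∀ x, Filter.Tendsto (fun s : ℝ => N (x - γ (-s)) - s) Filter.atTop (𝓝 (bm x)))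
    (hsand : ∀ x, f xbar - L * bp x ≤ f x ∧ f x ≤ f xbar + L * bm x) :
    (∀ x, f x = f xbar + L * bm x) ∧
    (∀ x, f x = f xbar - L * bp x) ∧
    ∃ w : Fin n → ℝ,
      (∀ x, bm x = ∑ i, w i * (x i - xbar i)) ∧
      (∀ x, bp x = -∑ i, w i * (x i - xbar i)) :=
  stmt_12_general n N hhom hC1 f L xbar v hv γ hγ bp bm hbp hbm hsand
end

section
/- Locality under minimum/maximum: let f₁, f₂ be Lipschitz functions on a locally Minkowski metric measure space with ks[f₁] ≤ 1 and ks[f₂] ≤ 1 m-a.e. Then f := max{f₁, f₂} and g := min{f₁, f₂} are Lipschitz and satisfy ks[f] ≤ 1 and ks[g] ≤ 1 m-a.e. Key computation: if x is a density point of the set {f₁ ≥ f₂}, at which the limits ks[f](x) and ks[f₁](x) exist, then ks[max{f₁,f₂}](x) = ks[f₁](x). -/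
open MeasureTheory Filter Metric Topology
open scoped ENNReal NNReal

/-- The Korevaar–Schoen energy density of `f` at scale `r`:
`ks_r[f](x) = ( ⨍_{B_r(x)} |f(y)-f(x)|²/r² dm(y) )^{1/2}`. -/
noncomputable def ksr {X : Type*} [MetricSpace X] [MeasurableSpace X]
    (m : Measure X) (f : X → ℝ) (r : ℝ) (x : X) : ℝ :=
  Real.sqrt (⨍ y in Metric.ball x r, ((f y - f x) / r) ^ 2 ∂m)

/-- The pointwise Lipschitz constant `Lip[f](x) = limsup_{y→x} |f(y)-f(x)|/d(y,x)`. -/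
noncomputable def pLip {X : Type*} [MetricSpace X] (f : X → ℝ) (x : X) : ℝ :=
  Filter.limsup (fun y => |f y - f x| / dist y x) (𝓝[≠] x)

/-- `g` is an upper gradient of `f` with respect to the distance `dd`:
for every absolutely continuous curve `γ : [0,1] → X`, with admissible speed `ℓ`,
`|f(γ₁)-f(γ₀)| ≤ ∫₀¹ g(γ_s) ℓ(s) ds`. -/
def IsUpperGradientWrt {X : Type*} (dd : X → X → ℝ) (f g : X → ℝ) : Prop :=
  ∀ (γ : ℝ → X) (ℓ : ℝ → ℝ),
    (∀ s ∈ Set.Icc (0:ℝ) 1, 0 ≤ ℓ s) →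
    IntervalIntegrable ℓ MeasureTheory.volume 0 1 →
    (∀ s t : ℝ, 0 ≤ s → s ≤ t → t ≤ 1 → dd (γ s) (γ t) ≤ ∫ u in s..t, ℓ u) →
    |f (γ 1) - f (γ 0)| ≤ ∫ s in (0:ℝ)..1, g (γ s) * ℓ s

/-- Local doubling condition for the balls of the metric. -/
def LocDoubling {X : Type*} [MetricSpace X] [MeasurableSpace X] (m : Measure X) : Prop :=
  ∀ R : ℝ, 0 < R → ∃ C : ℝ≥0∞, 0 < C ∧ ∀ (x : X) (r : ℝ), 0 < r → r < R →
    m (Metric.ball x (2 * r)) ≤ C * m (Metric.ball x r)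

/-- Local (2-)Poincaré inequality with dilation constant `Λ`. -/
def PoincareWith {X : Type*} [MetricSpace X] [MeasurableSpace X] (m : Measure X) (Λ : ℝ) : Prop :=
  ∀ R : ℝ, 0 < R → ∃ C : ℝ, 1 ≤ C ∧ ∀ (f g : X → ℝ) (x : X) (r : ℝ),
    Measurable f → IsUpperGradientWrt dist f g → 0 < r → r < R →
    ⨍ y in Metric.ball x r, |f y - ⨍ z in Metric.ball x r, f z ∂m| ∂m ≤
      C * r * Real.sqrt (⨍ y in Metric.ball x (Λ * r), (g y) ^ 2 ∂m)

/-- A space supports a Poincaré inequality if it does for some dilation `Λ ≥ 1`. -/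
def SupportsPoincare {X : Type*} [MetricSpace X] [MeasurableSpace X] (m : Measure X) : Prop :=
  ∃ Λ : ℝ, 1 ≤ Λ ∧ PoincareWith m Λ

/-- "`ks[f] ≤ 1` `m`-a.e.": at `m`-a.e. point the limit of the Korevaar–Schoen
potentials exists and is at most `1`. -/
def KsLeOne {X : Type*} [MetricSpace X] [MeasurableSpace X]
    (m : Measure X) (f : X → ℝ) : Prop :=
  ∀ᵐ x ∂m, ∃ a : ℝ,
    Filter.Tendsto (fun r => ksr m f r x) (𝓝[>] (0:ℝ)) (𝓝 a) ∧ a ≤ 1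

/-- A competitor for the intrinsic Korevaar–Schoen distance: a Lipschitz
function with `ks[f] ≤ 1` `m`-a.e. -/
def KsCompetitor {X : Type*} [MetricSpace X] [MeasurableSpace X]
    (m : Measure X) (f : X → ℝ) : Prop :=
  (∃ K : ℝ≥0, LipschitzWith K f) ∧ KsLeOne m f

/-- The intrinsic distance associated to the Korevaar–Schoen energy. -/
noncomputable def dKS {X : Type*} [MetricSpace X] [MeasurableSpace X]
    (m : Measure X) (x y : X) : ℝ :=
  sSup {t : ℝ | ∃ f : X → ℝ, KsCompetitor m f ∧ t = f y - f x}

/-- `(X, d, m)` is a locally Minkowski space with dimension bound `Nb`: at `m`-a.e.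
point there are, at all sufficiently small scales, almost-isometric charts onto a
fixed `C¹`-normed space `(ℝ^n, Nm)`, almost surjective and almost measure-preserving. -/
def LocallyMinkowski {X : Type*} [MetricSpace X] [MeasurableSpace X]
    (m : Measure X) (Nb : ℕ) : Prop :=
  ∀ᵐ x ∂m, ∃ n : ℕ, n ≤ Nb ∧ ∃ Nm : (Fin n → ℝ) → ℝ,
    (∀ z, 0 ≤ Nm z) ∧ (∀ z, Nm z = 0 ↔ z = 0) ∧
    (∀ (a : ℝ) (z : Fin n → ℝ), Nm (a • z) = |a| * Nm z) ∧
    (∀ z w, Nm (z + w) ≤ Nm z + Nm w) ∧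
    (∀ z : Fin n → ℝ, z ≠ 0 → ContDiffAt ℝ 1 Nm z) ∧
    ∃ (i : ℝ → X → Fin n → ℝ) (c : ℝ), 0 < c ∧
      (∀ r : ℝ, 0 < r → i r x = 0) ∧
      (∀ ε : ℝ, 0 < ε → ∃ r₀ > (0:ℝ), ∀ r : ℝ, 0 < r → r < r₀ →
        (∀ y ∈ Metric.ball x r, ∀ y' ∈ Metric.ball x r,
          (1 - ε) * (dist y y' / r) ≤ Nm (i r y - i r y') ∧
          Nm (i r y - i r y') ≤ (1 + ε) * (dist y y' / r)) ∧
        ({z | Nm z < 1 - ε} ⊆ i r '' Metric.ball x r) ∧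
        (∀ S : Set (Fin n → ℝ), MeasurableSet S → S ⊆ i r '' Metric.ball x r →
          ENNReal.ofReal ((1 - ε) * c) * MeasureTheory.volume S ≤
              m (i r ⁻¹' S ∩ Metric.ball x r) / m (Metric.ball x r) ∧
            m (i r ⁻¹' S ∩ Metric.ball x r) / m (Metric.ball x r) ≤
              ENNReal.ofReal ((1 + ε) * c) * MeasureTheory.volume S))

/-!
Let `E = {f₂ ≤ f₁}`. Where `E` has density one at `x`, the functions `max f₁ f₂` and `f₁` agree
on all of `B_r(x)` except a set of vanishing relative measure, and the integrands of both
Korevaar–Schoen potentials are bounded by `K²` on `B_r(x)` (`K` a common Lipschitz constant).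
Hence the potentials differ by at most `K √(m(B_r(x) \ E) / m(B_r(x)))`, which tends to `0`.

The charts of a locally Minkowski space make `m` doubling at small scales around almost every
point, with a constant depending on the point. On each set where the constant is at most `k`,
the Vitali covering theorem applies, so almost every point of a measurable set is a density
point. Since `X = {f₂ ≤ f₁} ∪ {f₁ ≤ f₂}`, almost everywhere `ks[max f₁ f₂]` equals `ks[f₁]` or
`ks[f₂]`, so it is at most `1`. The same holds for the minimum.
-/

open Set

lemma ENNReal.tendsto_div_nhds_zero {α : Type*} {l : Filter α} {a b : α → ℝ≥0∞}
    (h : ∀ n : ℕ, ∀ᶠ i in l, n * a i ≤ b i) : Tendsto (fun i => a i / b i) l (𝓝 0) := by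
  rw [ENNReal.tendsto_nhds_zero]
  intro ε hε
  obtain ⟨n, hn⟩ := ENNReal.exists_inv_nat_lt hε.ne'
  have hn0 : (n : ℝ≥0∞) ≠ 0 := fun h0 => by simp [h0] at hn
  filter_upwards [h n] with i hi
  refine (ENNReal.div_le_of_le_mul ?_).trans hn.le
  calc a i = (n : ℝ≥0∞)⁻¹ * (n * a i) := by
        rw [← mul_assoc, ENNReal.inv_mul_cancel hn0 (ENNReal.natCast_ne_top n), one_mul]
    _ ≤ (n : ℝ≥0∞)⁻¹ * b i := by gcongr

lemma abs_sqrt_sub_sqrt_le_of_nonneg {a b : ℝ} (ha : 0 ≤ a) (hb : 0 ≤ b) :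
    |√a - √b| ≤ √|a - b| := by
  refine Real.abs_le_sqrt ?_
  have hsum : |√a - √b| ≤ √a + √b := (abs_sub _ _).trans_eq (by
    rw [abs_of_nonneg (Real.sqrt_nonneg a), abs_of_nonneg (Real.sqrt_nonneg b)])
  have hdiff : a - b = (√a - √b) * (√a + √b) := by
    linear_combination -(Real.sq_sqrt ha) + Real.sq_sqrt hb
  rw [← sq_abs, sq, hdiff, abs_mul, abs_of_nonneg (by positivity : 0 ≤ √a + √b)]
  gcongr

lemma abs_sqrt_sub_sqrt_le (a b : ℝ) : |√a - √b| ≤ √|a - b| := by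
  have h : ∀ c : ℝ, √c = √(max c 0) := fun c => by
    rcases le_total c 0 with hc | hc
    · rw [Real.sqrt_eq_zero_of_nonpos hc, max_eq_right hc, Real.sqrt_zero]
    · rw [max_eq_left hc]
  rw [h a, h b]
  exact (abs_sqrt_sub_sqrt_le_of_nonneg (le_max_right _ _) (le_max_right _ _)).trans
    (Real.sqrt_le_sqrt (abs_max_sub_max_le_abs a b 0))

lemma le_sum_mul_norm_of_subadditive {n : ℕ} (N : (Fin n → ℝ) → ℝ) (hN : ∀ z, 0 ≤ N z)
    (hhom : ∀ (a : ℝ) z, N (a • z) = |a| * N z) (htri : ∀ z w, N (z + w) ≤ N z + N w)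
    (z : Fin n → ℝ) : N z ≤ (∑ i, N (Pi.single i 1)) * ‖z‖ := by
  have h0 : N 0 = 0 := by simpa using hhom 0 0
  calc N z = N (∑ i, z i • Pi.single i 1) := by
        congr 1; ext j; simp [Pi.single_apply]
    _ ≤ ∑ i, N (z i • Pi.single i 1) := Finset.le_sum_of_subadditive N h0.le htri _ _
    _ = ∑ i, |z i| * N (Pi.single i 1) := by simp only [hhom]
    _ ≤ ∑ i, ‖z‖ * N (Pi.single i 1) := by
        gcongr with i
        · exact hN _
        · exact norm_le_pi_norm z i
    _ = (∑ i, N (Pi.single i 1)) * ‖z‖ := by rw [Finset.sum_mul]; simp only [mul_comm]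

lemma sq_div_le_of_lipschitzWith {X : Type*} [PseudoMetricSpace X] {f : X → ℝ} {K : ℝ≥0}
    (hf : LipschitzWith K f) {x : X} {r : ℝ} (hr : 0 < r) {y : X}
    (hy : y ∈ ball x r) : ((f y - f x) / r) ^ 2 ≤ K ^ 2 := by
  have h : |f y - f x| ≤ K * r := by
    rw [← Real.dist_eq]
    exact (hf.dist_le_mul y x).trans (by gcongr; exact (mem_ball.1 hy).le)
  rw [div_pow, div_le_iff₀ (by positivity), ← mul_pow, ← sq_abs]
  gcongr

lemma tendsto_measure_diff_div_of_tendsto_measure_inter_div {X : Type*} [MeasurableSpace X]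
    (m : Measure X) {ι : Type*} {l : Filter ι}
    {B : ι → Set X} {E : Set X} (hE : MeasurableSet E)
    (h : Tendsto (fun i => m (B i ∩ E) / m (B i)) l (𝓝 1)) :
    Tendsto (fun i => m (B i \ E) / m (B i)) l (𝓝 0) := by
  have hsum : ∀ i, m (B i ∩ E) / m (B i) + m (B i \ E) / m (B i) ≤ 1 := fun i => by
    rw [ENNReal.div_add_div_same, measure_inter_add_sdiff _ hE]
    exact ENNReal.div_self_le_one
  have hsub : Tendsto (fun i => 1 - m (B i ∩ E) / m (B i)) l (𝓝 0) := by
    simpa using ENNReal.Tendsto.sub tendsto_const_nhds h (Or.inl ENNReal.one_ne_top)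
  refine tendsto_of_tendsto_of_tendsto_of_le_of_le tendsto_const_nhds hsub (fun _ => zero_le)
    fun i => ENNReal.le_sub_of_add_le_left (ne_top_of_le_ne_top ENNReal.one_ne_top
      (le_self_add.trans (hsum i))) (hsum i)

section Doubling

variable {X : Type*} [MetricSpace X] [MeasurableSpace X]

def IsDoublingAt (m : Measure X) (C : ℝ≥0) (x : X) : Prop :=
  ∀ᶠ r in 𝓝[>] (0 : ℝ), m (ball x (2 * r)) ≤ C * m (ball x r)

variable {m : Measure X} {C : ℝ≥0} {x : X}

lemma IsDoublingAt.mono {D : ℝ≥0} (h : IsDoublingAt m C x) (hCD : C ≤ D) :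
    IsDoublingAt m D x :=
  Filter.Eventually.mono h fun _ hr => hr.trans (by gcongr)

lemma IsDoublingAt.eventually_closedBall (h : IsDoublingAt m C x) :
    ∀ᶠ r in 𝓝[>] (0 : ℝ), m (closedBall x (3 * r)) ≤ (C : ℝ≥0∞) ^ 2 * m (closedBall x r) ∧
      m (closedBall x r) ≤ C * m (ball x r) := by
  have h2 : Tendsto (fun r : ℝ => 2 * r) (𝓝[>] 0) (𝓝[>] 0) := by
    refine tendsto_nhdsWithin_of_tendsto_nhds_of_eventually_within _ ?_
      (eventually_nhdsWithin_of_forall fun r (hr : 0 < r) => show 0 < 2 * r by positivity)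
    simpa using ((continuous_const_mul (2 : ℝ)).tendsto 0).mono_left nhdsWithin_le_nhds
  filter_upwards [h, h2.eventually h, self_mem_nhdsWithin] with r hr h2r (hr0 : 0 < r)
  constructor
  · calc m (closedBall x (3 * r)) ≤ m (ball x (2 * (2 * r))) :=
          measure_mono (closedBall_subset_ball (by linarith))
      _ ≤ C * (C * m (ball x r)) := h2r.trans (by gcongr)
      _ ≤ (C : ℝ≥0∞) ^ 2 * m (closedBall x r) := by
          rw [← mul_assoc, ← sq]; gcongr; exact ball_subset_closedBall
  · exact (measure_mono (closedBall_subset_ball (by linarith))).trans hr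

end Doubling

theorem LocallyMinkowski.ae_isDoublingAt {X : Type*} [MetricSpace X] [MeasurableSpace X]
    {m : Measure X} [IsFiniteMeasure m] {Nb : ℕ} (hLM : LocallyMinkowski m Nb) :
    ∀ᵐ x ∂m, ∃ C : ℝ≥0, IsDoublingAt m C x := by
  filter_upwards [hLM] with x hx
  obtain ⟨n, -, Nm, hpos, -, hhom, htri, -, i, c, hc, hix, hchart⟩ := hx
  obtain ⟨r₀, hr₀, hchart⟩ := hchart (1 / 2) (by norm_num)
  set M := ∑ j, Nm (Pi.single j 1)
  have hM : 0 ≤ M := Finset.sum_nonneg fun j _ => hpos _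
  set S : Set (Fin n → ℝ) := ball 0 (1 / (4 * (M + 1)))
  have hS : ∀ z ∈ S, Nm z < 1 / 4 := fun z hz => by
    have hz : ‖z‖ * (4 * (M + 1)) < 1 := by
      rw [mem_ball_zero_iff, lt_div_iff₀ (by positivity)] at hz; exact hz
    have := le_sum_mul_norm_of_subadditive Nm hpos hhom htri z
    nlinarith [norm_nonneg z]
  set κ : ℝ≥0∞ := ENNReal.ofReal ((1 - 1 / 2) * c) * volume S
  have hκ : κ ≠ 0 := mul_ne_zero (ENNReal.ofReal_pos.2 (by linarith)).ne'
    (measure_ball_pos volume _ (by positivity)).ne'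
  have hκ' : κ ≠ ∞ := ENNReal.mul_ne_top ENNReal.ofReal_ne_top measure_ball_lt_top.ne
  refine ⟨κ⁻¹.toNNReal, ?_⟩
  filter_upwards [Ioo_mem_nhdsGT (half_pos hr₀)] with r ⟨hr, hr'⟩
  obtain ⟨hbilip, hsurj, hmeas⟩ := hchart (2 * r) (by positivity) (by linarith)
  have hSi : S ⊆ i (2 * r) '' ball x (2 * r) := fun z hz => hsurj (by
    show Nm z < 1 - 1 / 2; linarith [hS z hz])
  -- the chart is almost isometric, so it pulls `S` back into the ball of half the radius
  have hpre : i (2 * r) ⁻¹' S ∩ ball x (2 * r) ⊆ ball x r := by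
    rintro y ⟨hyS, hy⟩
    have hlow := (hbilip y hy x (mem_ball_self (by positivity))).1
    rw [hix _ (by positivity), sub_zero] at hlow
    have hd : dist y x / (2 * r) < 1 / 2 := by linarith [hS _ hyS]
    rw [div_lt_iff₀ (by positivity)] at hd
    rw [mem_ball]; linarith
  have hκm : κ * m (ball x (2 * r)) ≤ m (ball x r) := by
    rcases eq_or_ne (m (ball x (2 * r))) 0 with h0 | h0
    · simp [h0]
    refine le_trans ?_ (measure_mono hpre)
    rw [← ENNReal.le_div_iff_mul_le (Or.inl h0) (Or.inl (measure_ne_top _ _))]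
    exact (hmeas S isOpen_ball.measurableSet hSi).1
  rwa [ENNReal.coe_toNNReal (ENNReal.inv_ne_top.2 hκ), ← ENNReal.mul_le_iff_le_inv hκ hκ']

section Density

variable {X : Type*} [MetricSpace X] [MeasurableSpace X] (m : Measure X)

lemma mem_closure_of_tendsto_measure_inter_div {E : Set X} {x : X}
    (h : Tendsto (fun r => m (ball x r ∩ E) / m (ball x r)) (𝓝[>] 0) (𝓝 1)) :
    x ∈ closure E := by
  rw [Metric.mem_closure_iff]
  intro ε hε
  obtain ⟨r, hr, hrε⟩ := ((h.eventually (lt_mem_nhds zero_lt_one)).and (Ioo_mem_nhdsGT hε)).exists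
  obtain ⟨y, hyr, hyE⟩ := nonempty_of_measure_ne_zero (ENNReal.div_pos_iff.1 hr).1
  exact ⟨y, hyE, by rw [dist_comm]; exact (mem_ball.1 hyr).trans hrε.2⟩

variable [SecondCountableTopology X] [BorelSpace X] [IsFiniteMeasure m]

/-- Vitali covering argument: the closed balls of the hypothesis, chosen inside an open `U ⊇ s`,
cover `s` up to a null set, and each carries a fixed proportion of `Eᶜ`, so `m U` exceeds `m s`
by a fixed proportion of `m s`. -/
theorem measure_eq_zero_of_frequently_closedBall {E s : Set X} (hE : MeasurableSet E)
    (hsE : s ⊆ E) (C D : ℝ≥0)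
    (h : ∀ x ∈ s, ∃ᶠ r in 𝓝[>] (0 : ℝ), m (closedBall x (3 * r)) ≤ C * m (closedBall x r) ∧
      m (closedBall x r) ≤ D * m (closedBall x r \ E)) :
    m s = 0 := by
  have hU : ∀ U, IsOpen U → s ⊆ U → (D + 1) * m s ≤ D * m U := by
    intro U hU hsU
    set t : Set (X × ℝ) := {p | 0 < p.2 ∧ closedBall p.1 p.2 ⊆ U ∧
      m (closedBall p.1 (3 * p.2)) ≤ C * m (closedBall p.1 p.2) ∧
      m (closedBall p.1 p.2) ≤ D * m (closedBall p.1 p.2 \ E)}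
    obtain ⟨u, hut, hu, hdisj, hcov⟩ := Vitali.exists_disjoint_covering_ae' m s t C Prod.snd
      Prod.fst (fun p => closedBall p.1 p.2) (fun _ _ => subset_rfl) (fun _ hp => hp.2.2.1)
      (fun p hp => ⟨p.1, ball_subset_interior_closedBall (mem_ball_self hp.1)⟩)
      (fun _ _ => isClosed_closedBall) fun x hx => by
        obtain ⟨δ, hδ, hδU⟩ := nhds_basis_closedBall.mem_iff.1 (hU.mem_nhds (hsU hx))
        exact ((h x hx).and_eventually (Ioc_mem_nhdsGT hδ)).mono fun r ⟨hr, hr0, hrδ⟩ =>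
          ⟨(x, r), ⟨hr0, (closedBall_subset_closedBall hrδ).trans hδU, hr⟩, rfl, rfl⟩
    set V := ⋃ p ∈ u, closedBall p.1 p.2
    have hsV : m s ≤ m (V ∩ E) := by
      calc m s ≤ m (s ∩ V) + m (s \ V) := measure_le_inter_add_sdiff _ _ _
        _ = m (s ∩ V) := by rw [hcov, add_zero]
        _ ≤ m (V ∩ E) := measure_mono fun y hy => ⟨hy.2, hsE hy.1⟩
    have hVE : m V ≤ D * m (V \ E) := by
      calc m V = ∑' p : u, m (closedBall p.1.1 p.1.2) :=
            measure_biUnion hu hdisj fun _ _ => measurableSet_closedBall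
        _ ≤ ∑' p : u, D * m (closedBall p.1.1 p.1.2 \ E) :=
            ENNReal.tsum_le_tsum fun p => (hut p.2).2.2.2
        _ = D * m (⋃ p ∈ u, closedBall p.1 p.2 \ E) := by
            rw [ENNReal.tsum_mul_left, measure_biUnion hu (hdisj.mono fun _ => sdiff_subset)
              fun _ _ => measurableSet_closedBall.diff hE]
        _ ≤ D * m (V \ E) := by
            gcongr
            exact iUnion₂_subset fun p hp => sdiff_subset_sdiff_left
              (subset_biUnion_of_mem (u := fun p : X × ℝ => closedBall p.1 p.2) hp)
    have hVU : V ⊆ U := iUnion₂_subset fun p hp => (hut hp).2.1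
    calc (D + 1) * m s = D * m s + m s := by rw [add_mul, one_mul]
      _ ≤ D * m (V ∩ E) + D * m (V \ E) := add_le_add (by gcongr) ((hsV.trans
            (measure_mono inter_subset_left)).trans hVE)
      _ = D * m V := by rw [← mul_add, measure_inter_add_sdiff _ hE]
      _ ≤ D * m U := by gcongr
  have hle : (D + 1) * m s ≤ D * m s := by
    refine ENNReal.le_of_forall_pos_le_add fun ε hε _ => ?_
    obtain ⟨U, hsU, hUo, hUm⟩ := s.exists_isOpen_le_add m
      (ENNReal.div_pos (ENNReal.coe_ne_zero.2 hε.ne') ENNReal.coe_ne_top).ne'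
    calc (D + 1) * m s ≤ D * m U := hU U hUo hsU
      _ ≤ D * (m s + ε / D) := by gcongr
      _ ≤ D * m s + ε := by rw [mul_add]; gcongr; exact ENNReal.mul_div_le
  rw [add_mul, one_mul] at hle
  exact le_antisymm (ENNReal.le_of_add_le_add_left
    (ENNReal.mul_ne_top ENNReal.coe_ne_top (measure_ne_top m s)) (by simpa using hle)) zero_le

theorem ae_tendsto_measure_ball_diff_div (hD : ∀ᵐ x ∂m, ∃ C : ℝ≥0, IsDoublingAt m C x)
    {E : Set X} (hE : MeasurableSet E) :
    ∀ᵐ x ∂m, x ∈ E → Tendsto (fun r => m (ball x r \ E) / m (ball x r)) (𝓝[>] 0) (𝓝 0) := by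
  set bad : ℕ → ℕ → Set X := fun k n => {x | x ∈ E ∧ IsDoublingAt m k x ∧
    ∃ᶠ r in 𝓝[>] (0 : ℝ), m (ball x r) ≤ n * m (ball x r \ E)}
  have hbad : ∀ k n, m (bad k n) = 0 := fun k n =>
    measure_eq_zero_of_frequently_closedBall m hE (fun _ hx => hx.1) (k ^ 2) (k * n)
      fun x ⟨_, hk, hfreq⟩ => (hfreq.and_eventually hk.eventually_closedBall).mono
        fun r ⟨hn, h3, h1⟩ => ⟨by simpa using h3, calc
          m (closedBall x r) ≤ k * m (ball x r) := by simpa using h1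
          _ ≤ k * (n * m (closedBall x r \ E)) := by
              gcongr; exact hn.trans (by gcongr; exact ball_subset_closedBall)
          _ = ((k * n : ℝ≥0) : ℝ≥0∞) * m (closedBall x r \ E) := by push_cast; ring⟩
  have hgood : ∀ᵐ x ∂m, x ∉ ⋃ (k : ℕ) (n : ℕ), bad k n :=
    measure_eq_zero_iff_ae_notMem.1 (measure_iUnion_null fun k => measure_iUnion_null (hbad k))
  filter_upwards [hD, hgood] with x ⟨C, hC⟩ hx hxE
  refine ENNReal.tendsto_div_nhds_zero fun n => ?_
  by_contra hn
  exact hx (mem_iUnion₂.2 ⟨⌈C⌉₊, n, hxE, hC.mono (Nat.le_ceil C),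
    (not_eventually.1 hn).mono fun _ h => (not_le.1 h).le⟩)

end Density

section KorevaarSchoen

variable {X : Type*} [MetricSpace X] [MeasurableSpace X] [OpensMeasurableSpace X]
  {m : Measure X} [IsFiniteMeasure m] {f g : X → ℝ} {K : ℝ≥0} {E : Set X} {x : X}

lemma abs_ksr_sub_ksr_le (hf : LipschitzWith K f) (hg : LipschitzWith K g)
    (hfg : EqOn f g E) (hx : f x = g x) {r : ℝ} (hr : 0 < r) :
    |ksr m f r x - ksr m g r x| ≤ K * √(m (ball x r \ E) / m (ball x r)).toReal := by
  set F : X → ℝ := fun y => ((f y - f x) / r) ^ 2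
  set G : X → ℝ := fun y => ((g y - g x) / r) ^ 2
  have hFG : ∀ y ∈ ball x r, |F y - G y| ≤ K ^ 2 := fun y hy =>
    abs_sub_le_of_nonneg_of_le (sq_nonneg _) (sq_div_le_of_lipschitzWith hf hr hy)
      (sq_nonneg _) (sq_div_le_of_lipschitzWith hg hr hy)
  have hint : ∀ φ : X → ℝ, LipschitzWith K φ →
      IntegrableOn (fun y => ((φ y - φ x) / r) ^ 2) (ball x r) m := fun φ hφ =>
    Measure.integrableOn_of_bounded (M := K ^ 2) (measure_ne_top _ _)
      (by have := hφ.continuous; fun_prop) <|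
      (ae_restrict_iff' measurableSet_ball).2 <| Eventually.of_forall fun y hy => by
        rw [Real.norm_eq_abs, abs_of_nonneg (sq_nonneg _)]
        exact sq_div_le_of_lipschitzWith hφ hr hy
  have hdiff : |∫ y in ball x r, F y - G y ∂m| ≤ K ^ 2 * m.real (ball x r \ E) := by
    rw [setIntegral_eq_of_subset_of_forall_sdiff_eq_zero (s := ball x r \ E) measurableSet_ball
      sdiff_subset fun y hy => by
        have hyE : y ∈ E := by_contra fun h => hy.2 ⟨hy.1, h⟩
        simp [F, G, hfg hyE, hx]]
    exact norm_setIntegral_le_of_norm_le_const (measure_lt_top _ _)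
      fun y (hy : y ∈ ball x r \ E) => (Real.norm_eq_abs _).trans_le (hFG y hy.1)
  have hA : |(⨍ y in ball x r, F y ∂m) - ⨍ y in ball x r, G y ∂m| ≤
      K ^ 2 * (m (ball x r \ E) / m (ball x r)).toReal := by
    rw [setAverage_eq, setAverage_eq, smul_eq_mul, smul_eq_mul, ← mul_sub,
      ← integral_sub (hint f hf) (hint g hg), abs_mul, abs_inv, abs_of_nonneg measureReal_nonneg,
      ENNReal.toReal_div, ← measureReal_def, ← measureReal_def, mul_div_assoc', div_eq_inv_mul]
    gcongr
  calc |ksr m f r x - ksr m g r x| ≤ √|(⨍ y in ball x r, F y ∂m) - ⨍ y in ball x r, G y ∂m| :=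
        abs_sqrt_sub_sqrt_le _ _
    _ ≤ √(K ^ 2 * (m (ball x r \ E) / m (ball x r)).toReal) := Real.sqrt_le_sqrt hA
    _ = K * √(m (ball x r \ E) / m (ball x r)).toReal := by
        rw [Real.sqrt_mul (sq_nonneg _), Real.sqrt_sq K.coe_nonneg]

theorem tendsto_ksr_sub_ksr (hf : LipschitzWith K f) (hg : LipschitzWith K g) (hfg : EqOn f g E)
    (hx : f x = g x)
    (hE : Tendsto (fun r => m (ball x r \ E) / m (ball x r)) (𝓝[>] 0) (𝓝 0)) :
    Tendsto (fun r => ksr m f r x - ksr m g r x) (𝓝[>] 0) (𝓝 0) := by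
  have hbound : Tendsto (fun r => K * √(m (ball x r \ E) / m (ball x r)).toReal)
      (𝓝[>] 0) (𝓝 0) := by
    simpa using (((ENNReal.tendsto_toReal ENNReal.zero_ne_top).comp hE).sqrt).const_mul (K : ℝ)
  exact squeeze_zero_norm' (eventually_nhdsWithin_of_forall fun r hr =>
    abs_ksr_sub_ksr_le hf hg hfg hx hr) hbound

theorem tendsto_ksr_of_eqOn (hf : LipschitzWith K f) (hg : LipschitzWith K g) (hfg : EqOn f g E)
    (hx : f x = g x)
    (hE : Tendsto (fun r => m (ball x r \ E) / m (ball x r)) (𝓝[>] 0) (𝓝 0)) {b : ℝ}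
    (hgb : Tendsto (fun r => ksr m g r x) (𝓝[>] 0) (𝓝 b)) :
    Tendsto (fun r => ksr m f r x) (𝓝[>] 0) (𝓝 b) := by
  simpa using (tendsto_ksr_sub_ksr hf hg hfg hx hE).add hgb

end KorevaarSchoen

theorem KsLeOne.of_eqOn_union {X : Type*} [MetricSpace X] [SecondCountableTopology X]
    [MeasurableSpace X] [BorelSpace X] {m : Measure X} [IsFiniteMeasure m] {K : ℝ≥0}
    (hD : ∀ᵐ x ∂m, ∃ C : ℝ≥0, IsDoublingAt m C x) {φ f₁ f₂ : X → ℝ}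
    (hφ : LipschitzWith K φ) (h₁ : LipschitzWith K f₁) (h₂ : LipschitzWith K f₂)
    {E₁ E₂ : Set X} (hE₁ : MeasurableSet E₁) (hE₂ : MeasurableSet E₂) (hcover : E₁ ∪ E₂ = univ)
    (hφ₁ : EqOn φ f₁ E₁) (hφ₂ : EqOn φ f₂ E₂) (hks₁ : KsLeOne m f₁) (hks₂ : KsLeOne m f₂) :
    KsLeOne m φ := by
  filter_upwards [hks₁, hks₂, ae_tendsto_measure_ball_diff_div m hD hE₁,
    ae_tendsto_measure_ball_diff_div m hD hE₂] with x ⟨b₁, hb₁, hb₁1⟩ ⟨b₂, hb₂, hb₂1⟩ hd₁ hd₂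
  rcases (hcover.symm ▸ mem_univ x : x ∈ E₁ ∪ E₂) with hx | hx
  · exact ⟨b₁, tendsto_ksr_of_eqOn hφ h₁ hφ₁ (hφ₁ hx) (hd₁ hx) hb₁, hb₁1⟩
  · exact ⟨b₂, tendsto_ksr_of_eqOn hφ h₂ hφ₂ (hφ₂ hx) (hd₂ hx) hb₂, hb₂1⟩

theorem stmt_17_general {X : Type*} [MetricSpace X]
    [TopologicalSpace.SeparableSpace X] [MeasurableSpace X] [BorelSpace X]
    (m : Measure X) [IsFiniteMeasure m] (Nb : ℕ)
    (hLM : LocallyMinkowski m Nb)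
    (f₁ f₂ : X → ℝ) (K₁ K₂ : ℝ≥0)
    (h₁ : LipschitzWith K₁ f₁) (h₂ : LipschitzWith K₂ f₂)
    (hks₁ : KsLeOne m f₁) (hks₂ : KsLeOne m f₂) :
    ((∃ K : ℝ≥0, LipschitzWith K fun x => max (f₁ x) (f₂ x)) ∧
     (∃ K : ℝ≥0, LipschitzWith K fun x => min (f₁ x) (f₂ x)) ∧
     KsLeOne m (fun x => max (f₁ x) (f₂ x)) ∧
     KsLeOne m (fun x => min (f₁ x) (f₂ x))) ∧
    -- key computation: at density points of {f₁ ≥ f₂} where the limits exist,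
    -- the potentials of max{f₁,f₂} and of f₁ coincide
    (∀ (x : X) (a b : ℝ),
      Filter.Tendsto
        (fun r => m (Metric.ball x r ∩ {y | f₂ y ≤ f₁ y}) / m (Metric.ball x r))
        (𝓝[>] (0:ℝ)) (𝓝 1) →
      Filter.Tendsto (fun r => ksr m (fun y => max (f₁ y) (f₂ y)) r x)
        (𝓝[>] (0:ℝ)) (𝓝 a) →
      Filter.Tendsto (fun r => ksr m f₁ r x) (𝓝[>] (0:ℝ)) (𝓝 b) →
      a = b) := by
  have hD := hLM.ae_isDoublingAt
  have hE₁ : IsClosed {y | f₂ y ≤ f₁ y} := isClosed_le h₂.continuous h₁.continuous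
  have hE₂ : IsClosed {y | f₁ y ≤ f₂ y} := isClosed_le h₁.continuous h₂.continuous
  have hcover : {y | f₂ y ≤ f₁ y} ∪ {y | f₁ y ≤ f₂ y} = univ :=
    eq_univ_of_forall fun y => le_total (f₂ y) (f₁ y)
  have h₁' := h₁.weaken (le_max_left K₁ K₂)
  have h₂' := h₂.weaken (le_max_right K₁ K₂)
  refine ⟨⟨⟨_, h₁.max h₂⟩, ⟨_, h₁.min h₂⟩, ?_, ?_⟩, ?_⟩
  · exact KsLeOne.of_eqOn_union hD (h₁.max h₂) h₁' h₂' hE₁.measurableSet hE₂.measurableSet hcover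
      (fun _ h => max_eq_left h) (fun _ h => max_eq_right h) hks₁ hks₂
  · exact KsLeOne.of_eqOn_union hD (h₁.min h₂) h₁' h₂' hE₂.measurableSet hE₁.measurableSet
      (union_comm _ _ ▸ hcover) (fun _ h => min_eq_left h) (fun _ h => min_eq_right h) hks₁ hks₂
  · intro x a b hdens hmax hf₁
    have hx : f₂ x ≤ f₁ x := hE₁.closure_subset (mem_closure_of_tendsto_measure_inter_div m hdens)
    exact tendsto_nhds_unique hmax (tendsto_ksr_of_eqOn (h₁.max h₂) h₁' (fun _ h => max_eq_left h)
      (max_eq_left hx) (tendsto_measure_diff_div_of_tendsto_measure_inter_div m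
        hE₁.measurableSet hdens) hf₁)

theorem stmt_17 {X : Type*} [MetricSpace X] [CompleteSpace X]
    [TopologicalSpace.SeparableSpace X] [MeasurableSpace X] [BorelSpace X]
    (m : Measure X) [IsFiniteMeasure m] (Nb : ℕ)
    (hLM : LocallyMinkowski m Nb)
    (hdoub : LocDoubling m) (hpoin : SupportsPoincare m)
    (f₁ f₂ : X → ℝ) (K₁ K₂ : ℝ≥0)
    (h₁ : LipschitzWith K₁ f₁) (h₂ : LipschitzWith K₂ f₂)
    (hks₁ : KsLeOne m f₁) (hks₂ : KsLeOne m f₂) :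
    ((∃ K : ℝ≥0, LipschitzWith K fun x => max (f₁ x) (f₂ x)) ∧
     (∃ K : ℝ≥0, LipschitzWith K fun x => min (f₁ x) (f₂ x)) ∧
     KsLeOne m (fun x => max (f₁ x) (f₂ x)) ∧
     KsLeOne m (fun x => min (f₁ x) (f₂ x))) ∧
    -- key computation: at density points of {f₁ ≥ f₂} where the limits exist,
    -- the potentials of max{f₁,f₂} and of f₁ coincide
    (∀ (x : X) (a b : ℝ),
      Filter.Tendsto
        (fun r => m (Metric.ball x r ∩ {y | f₂ y ≤ f₁ y}) / m (Metric.ball x r))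
        (𝓝[>] (0:ℝ)) (𝓝 1) →
      Filter.Tendsto (fun r => ksr m (fun y => max (f₁ y) (f₂ y)) r x)
        (𝓝[>] (0:ℝ)) (𝓝 a) →
      Filter.Tendsto (fun r => ksr m f₁ r x) (𝓝[>] (0:ℝ)) (𝓝 b) →
      a = b) :=
  stmt_17_general m Nb hLM f₁ f₂ K₁ K₂ h₁ h₂ hks₁ hks₂
end
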